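/- Let p be a prime, let R be a group of operators for a finite group G such that every inner automorphism of G lies in the image of R in Aut G (Inn G ≤ Aut_R G), and let g ∈ G be a p-element. Then g ∈ L_∞(G, R) if and only if g^r = g for every element r ∈ R whose order is coprime to p. -/

import Mathlib

/-- The commutator `[x, r] = x⁻¹ · x^r` for an operator group acting via `φ : R →* Aut G`. -/
def opComm {R G : Type*} [Group R] [Group G] (φ : R →* MulAut G) (x : G) (r : R) : G :=
  x⁻¹ * φ r x

/-- `opL φ n = Lₙ(G, R)`: elements `x` with `[x, r₁, …, rₙ] = 1` for all `r₁, …, rₙ ∈ R`. -/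
def opL {R G : Type*} [Group R] [Group G] (φ : R →* MulAut G) (n : ℕ) : Set G :=
  {x | ∀ l : List R, l.length = n → l.foldl (opComm φ) x = 1}
/-!
Form `Γ = G ⋊ R`. Since `R` induces every inner automorphism of `G`, the commutators `[x, r]`
are exactly the group commutators in `Γ` of `x ∈ G` with elements of `Γ`, so
`Lₙ(G, R) = G ∩ Zₙ(Γ)`; and the automorphisms of `G` induced by `p'`-elements of `Γ` are those
induced by `p'`-elements of `R`. The theorem thus becomes Baer's description of the hypercentral
`p`-elements of the finite group `Γ`: a `p`-element `x` lies in `Z_∞(Γ)` iff it commutes with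
every `p'`-element `y`.

If `x ∈ Zₙ(Γ)`, it lies in a normal `p`-subgroup `P` (the Sylow subgroup of the nilpotent group
`Zₙ(Γ)`), and `y` centralizes `P ∩ Zᵢ(Γ)` by induction on `i`: for `a ∈ P ∩ Zᵢ₊₁(Γ)`, `y` fixes the
`p`-element `c = [a⁻¹, y]` while `a^y = a c`, so `c ^ |y| = 1` and `c = 1`. Conversely, let `D` be
generated by the `p'`-elements and `S ∋ x` a Sylow `p`-subgroup. As `Γ / D` is a `p`-group,
`Γ = D S`, and `[a, d s] = [a, s]` for `a` centralizing `D`; so `S ∩ C(D) ∋ x` climbs the upper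
central series of `Γ` alongside that of the nilpotent group `S`.
-/

open scoped commutatorElement

section Baer

variable {Γ : Type*} [Group Γ] {p : ℕ}

theorem conj_pow_eq_mul_pow_of_commute {y a c : Γ} (hc : Commute y c)
    (h : y * a * y⁻¹ = a * c) (j : ℕ) : y ^ j * a * (y ^ j)⁻¹ = a * c ^ j := by
  induction j with
  | zero => simp
  | succ j ih =>
    calc y ^ (j + 1) * a * (y ^ (j + 1))⁻¹ = y * (y ^ j * a * (y ^ j)⁻¹) * y⁻¹ := by group
      _ = (y * a * y⁻¹) * (y * c ^ j * y⁻¹) := by rw [ih]; group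
      _ = a * c ^ (j + 1) := by
        rw [h, (hc.pow_right j).eq, mul_inv_cancel_right, pow_succ', mul_assoc]

theorem eq_one_of_conj_eq_mul_of_coprime {y a c : Γ} (hc : Commute y c)
    (h : y * a * y⁻¹ = a * c) (hcop : (orderOf y).Coprime (orderOf c)) : c = 1 := by
  have hpow : c ^ orderOf y = 1 := by
    simpa [pow_orderOf_eq_one] using (conj_pow_eq_mul_pow_of_commute hc h (orderOf y)).symm
  exact orderOf_eq_one_iff.mp (hcop.symm.eq_one_of_dvd (orderOf_dvd_of_pow_eq_one hpow))

theorem commute_of_mem_inf_upperCentralSeries {P : Subgroup Γ} [P.Normal] (hP : IsPGroup p P)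
    {y : Γ} (hy : (orderOf y).Coprime p) (n : ℕ) :
    ∀ a ∈ P ⊓ Subgroup.upperCentralSeries Γ n, Commute y a := by
  induction n with
  | zero =>
    intro a ha
    rw [Subgroup.upperCentralSeries_zero, inf_bot_eq, Subgroup.mem_bot] at ha
    exact ha ▸ Commute.one_right y
  | succ n ih =>
    intro a ha
    obtain ⟨haP, haZ⟩ := Subgroup.mem_inf.mp ha
    have hconj : y * a * y⁻¹ = a * ⁅a⁻¹, y⁆ := by rw [commutatorElement_def]; group
    have hcP : ⁅a⁻¹, y⁆ ∈ P := by
      rw [← inv_mul_eq_iff_eq_mul.mpr hconj]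
      exact mul_mem (inv_mem haP) (‹P.Normal›.conj_mem a haP y)
    have hcZ : ⁅a⁻¹, y⁆ ∈ Subgroup.upperCentralSeries Γ n :=
      Subgroup.mem_upperCentralSeries_succ_iff.mp (inv_mem haZ) y
    have hcop : (orderOf y).Coprime (orderOf ⁅a⁻¹, y⁆) :=
      (Subgroup.orderOf_mk _ hcP ▸ hP.orderOf_coprime hy.symm ⟨_, hcP⟩).symm
    have hc_one := eq_one_of_conj_eq_mul_of_coprime (ih _ ⟨hcP, hcZ⟩) hconj hcop
    rw [hc_one, mul_one] at hconj
    exact mul_inv_eq_iff_eq_mul.mp hconj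


instance Subgroup.isNilpotent_upperCentralSeries (n : ℕ) :
    Group.IsNilpotent (Subgroup.upperCentralSeries Γ n) := by
  rw [Subgroup.nilpotent_iff_finite_ascending_central_series]
  refine ⟨n, fun i => (Subgroup.upperCentralSeries Γ i).comap
    (Subgroup.upperCentralSeries Γ n).subtype,
    ⟨?_, fun x i hx g => Subgroup.mem_upperCentralSeries_succ_iff.mp hx g⟩, ?_⟩ <;> simp

theorem exists_normal_isPGroup_mem [Finite Γ] [Fact p.Prime] {N : Subgroup Γ} [N.Normal]
    [Group.IsNilpotent N] {x : Γ} (hxN : x ∈ N) (hx : ∃ k, orderOf x = p ^ k) :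
    ∃ P : Subgroup Γ, P.Normal ∧ IsPGroup p P ∧ x ∈ P := by
  obtain ⟨k, hk⟩ := hx
  have hzpowers : IsPGroup p (Subgroup.zpowers (⟨x, hxN⟩ : N)) :=
    IsPGroup.of_card (by rw [Nat.card_zpowers, Subgroup.orderOf_mk, hk])
  obtain ⟨Q, hQ⟩ := hzpowers.exists_le_sylow
  have := Sylow.characteristic_of_normal Q inferInstance
  exact ⟨(Q : Subgroup N).map N.subtype, inferInstance, Q.isPGroup'.map _,
    ⟨_, hQ (Subgroup.mem_zpowers _), rfl⟩⟩

theorem commute_of_mem_upperCentralSeries [Finite Γ] (hp : p.Prime) {x y : Γ} {n : ℕ}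
    (hx : x ∈ Subgroup.upperCentralSeries Γ n) (hxp : ∃ k, orderOf x = p ^ k)
    (hy : (orderOf y).Coprime p) : Commute y x := by
  have := Fact.mk hp
  obtain ⟨P, hPn, hP, hxP⟩ := exists_normal_isPGroup_mem hx hxp
  exact commute_of_mem_inf_upperCentralSeries hP hy n x ⟨hxP, hx⟩

theorem exists_inf_centralizer_le_upperCentralSeries {D S : Subgroup Γ} [D.Normal] (hDS : D ⊔ S = ⊤)
    [Group.IsNilpotent S] :
    ∃ n, S ⊓ Subgroup.centralizer D ≤ Subgroup.upperCentralSeries Γ n := by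
  obtain ⟨n, hn⟩ := Group.IsNilpotent.nilpotent S
  let H : ℕ → Subgroup Γ := fun i =>
    Subgroup.centralizer D ⊓ (Subgroup.upperCentralSeries S i).map S.subtype
  have hH : Subgroup.IsAscendingCentralSeries H := by
    refine ⟨by simp [H], fun a i ha γ => ?_⟩
    obtain ⟨haC, a', ha', rfl⟩ := Subgroup.mem_inf.mp ha
    obtain ⟨d, hd, s, hs, rfl⟩ :=
      Subgroup.mem_sup_of_normal_left.mp (hDS ▸ Subgroup.mem_top γ)
    rw [Subgroup.subtype_apply] at haC ⊢
    have had : d * a' = a' * d := Subgroup.mem_centralizer_iff.mp haC d hd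
    have hcC : ⁅(a' : Γ), s⁆ ∈ Subgroup.centralizer D := by
      rw [show ⁅(a' : Γ), s⁆ = a' * (s * (a' : Γ)⁻¹ * s⁻¹) by rw [commutatorElement_def]; group]
      exact mul_mem haC (Subgroup.Normal.conj_mem inferInstance _ (inv_mem haC) s)
    have hcd : d * ⁅(a' : Γ), s⁆ = ⁅(a' : Γ), s⁆ * d :=
      Subgroup.mem_centralizer_iff.mp hcC d hd
    have hcomm : ⁅(a' : Γ), d * s⁆ = ⁅(a' : Γ), s⁆ :=
      calc ⁅(a' : Γ), d * s⁆ = d * ⁅(a' : Γ), s⁆ * d⁻¹ := by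
            simp only [commutatorElement_def, ← mul_assoc, ← had]; group
        _ = ⁅(a' : Γ), s⁆ := mul_inv_eq_of_eq_mul hcd
    rw [hcomm]
    exact ⟨hcC, ⁅a', ⟨s, hs⟩⁆, Subgroup.mem_upperCentralSeries_succ_iff.mp ha' _,
      map_commutatorElement _ _ _⟩
  refine ⟨n, fun x hx => Subgroup.ascending_central_series_le_upper H hH n
    ⟨hx.2, ⟨x, hx.1⟩, hn ▸ Subgroup.mem_top _, rfl⟩⟩

theorem coprime_orderOf_pow_ordProj (hp : p.Prime) {g : Γ} (hg : IsOfFinOrder g) :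
    (orderOf (g ^ p ^ (orderOf g).factorization p)).Coprime p := by
  rw [orderOf_pow_of_dvd (pow_ne_zero _ hp.ne_zero) (Nat.ordProj_dvd _ _)]
  exact (Nat.coprime_ordCompl hp hg.orderOf_pos.ne').symm

theorem Sylow.sup_eq_top_of_isPGroup_quotient [Finite Γ] [Fact p.Prime] {D : Subgroup Γ}
    [D.Normal] (hD : IsPGroup p (Γ ⧸ D)) (S : Sylow p Γ) : D ⊔ S = ⊤ := by
  obtain ⟨k, hk⟩ := IsPGroup.iff_card.mp hD
  have hcop : (S : Subgroup Γ).index.Coprime (D.index) := by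
    rw [show D.index = p ^ k from hk]
    exact (((Fact.out : p.Prime).coprime_iff_not_dvd).mpr S.not_dvd_index).symm.pow_right k
  exact Subgroup.index_eq_one.mp (Nat.eq_one_of_dvd_coprimes hcop
    (Subgroup.index_dvd_of_le le_sup_right) (Subgroup.index_dvd_of_le le_sup_left))

theorem exists_mem_upperCentralSeries_of_commute [Finite Γ] (hp : p.Prime) {x : Γ}
    (hx : ∃ k, orderOf x = p ^ k) (hcomm : ∀ y : Γ, (orderOf y).Coprime p → Commute y x) :
    ∃ n, x ∈ Subgroup.upperCentralSeries Γ n := by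
  have := Fact.mk hp
  set D := Subgroup.normalClosure {y : Γ | (orderOf y).Coprime p} with hD_def
  have hxD : x ∈ Subgroup.centralizer D := by
    rw [hD_def, Subgroup.normalClosure, Subgroup.centralizer_closure,
      Subgroup.mem_centralizer_iff]
    intro y hy
    obtain ⟨z, hz, hzy⟩ := Group.mem_conjugatesOfSet_iff.mp hy
    obtain ⟨c, rfl⟩ := isConj_iff.mp hzy
    refine hcomm _ ?_
    rwa [← MulAut.conj_apply, MulEquiv.orderOf_eq]
  have hD : IsPGroup p (Γ ⧸ D) := by
    intro q
    obtain ⟨γ, rfl⟩ := QuotientGroup.mk_surjective q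
    refine ⟨(orderOf γ).factorization p, ?_⟩
    rw [← QuotientGroup.mk_pow, QuotientGroup.eq_one_iff]
    exact Subgroup.subset_normalClosure
      (coprime_orderOf_pow_ordProj hp (isOfFinOrder_of_finite γ))
  obtain ⟨k, hk⟩ := hx
  obtain ⟨S, hS⟩ := (IsPGroup.of_card (by rw [Nat.card_zpowers, hk]) :
    IsPGroup p (Subgroup.zpowers x)).exists_le_sylow
  have := S.isPGroup'.isNilpotent
  obtain ⟨n, hn⟩ :=
    exists_inf_centralizer_le_upperCentralSeries (Sylow.sup_eq_top_of_isPGroup_quotient hD S)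
  exact ⟨n, hn ⟨hS (Subgroup.mem_zpowers x), hxD⟩⟩

theorem exists_mem_upperCentralSeries_iff_commute [Finite Γ] (hp : p.Prime) {x : Γ}
    (hx : ∃ k, orderOf x = p ^ k) :
    (∃ n, x ∈ Subgroup.upperCentralSeries Γ n) ↔
      ∀ y : Γ, (orderOf y).Coprime p → Commute y x :=
  ⟨fun ⟨_, hn⟩ _ hy => commute_of_mem_upperCentralSeries hp hn hx hy,
    exists_mem_upperCentralSeries_of_commute hp hx⟩

end Baer

theorem MonoidHom.exists_coprime_orderOf_eq {R H : Type*} [Group R] [Group H] [Finite R]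
    {p : ℕ} (hp : p.Prime) (f : R →* H) {h : H} (hh : h ∈ f.range)
    (hcop : (orderOf h).Coprime p) : ∃ r, (orderOf r).Coprime p ∧ f r = h := by
  obtain ⟨r, rfl⟩ := hh
  obtain ⟨m, hm⟩ :=
    exists_pow_eq_self_of_coprime (hcop.symm.pow_left ((orderOf r).factorization p))
  refine ⟨(r ^ p ^ (orderOf r).factorization p) ^ m, ?_, by rw [map_pow, map_pow, hm]⟩
  exact (coprime_orderOf_pow_ordProj hp (isOfFinOrder_of_finite r)).coprime_dvd_left
    (orderOf_pow_dvd m)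

namespace SemidirectProduct

variable {N G : Type*} [Group N] [Group G] {φ : G →* MulAut N}

instance [Finite N] [Finite G] : Finite (N ⋊[φ] G) := Finite.of_equiv _ equivProd.symm

variable (φ) in
def toMulAut : N ⋊[φ] G →* MulAut N :=
  lift MulAut.conj φ fun g => by ext x y; simp [MulAut.conj_apply, mul_assoc]

@[simp] theorem toMulAut_inl (n : N) : toMulAut φ (inl n) = MulAut.conj n := lift_inl _ _ _ n
@[simp] theorem toMulAut_inr (g : G) : toMulAut φ (inr g) = φ g := lift_inr _ _ _ g

theorem conj_inl (w : N ⋊[φ] G) (n : N) : w * inl n * w⁻¹ = inl (toMulAut φ w n) := by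
  rw [← inl_left_mul_inr_right w, map_mul, toMulAut_inl, toMulAut_inr, MulAut.mul_apply,
    MulAut.conj_apply, map_mul, map_mul, map_inv, inl_aut, map_inv]
  group

theorem commute_inl_iff (w : N ⋊[φ] G) (n : N) : Commute w (inl n) ↔ toMulAut φ w n = n := by
  rw [commute_iff_eq, ← mul_inv_eq_iff_eq_mul, conj_inl, inl_inj]

theorem range_toMulAut (h : ∀ n : N, MulAut.conj n ∈ φ.range) :
    (toMulAut φ).range = φ.range := by
  refine le_antisymm ?_ fun _ ⟨g, hg⟩ => ⟨inr g, by rw [toMulAut_inr, hg]⟩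
  rintro _ ⟨w, rfl⟩
  rw [← inl_left_mul_inr_right w, map_mul, toMulAut_inl, toMulAut_inr]
  exact mul_mem (h _) ⟨_, rfl⟩

theorem forall_toMulAut_iff (h : ∀ n : N, MulAut.conj n ∈ φ.range) {P : MulAut N → Prop} :
    (∀ w : N ⋊[φ] G, P (toMulAut φ w)) ↔ ∀ g, P (φ g) := by
  rw [← Set.forall_mem_range, ← Set.forall_mem_range (f := φ), ← MonoidHom.coe_range,
    ← MonoidHom.coe_range, range_toMulAut h]

theorem forall_coprime_toMulAut_iff [Finite G] {p : ℕ} (hp : p.Prime)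
    (h : ∀ n : N, MulAut.conj n ∈ φ.range) {P : MulAut N → Prop} :
    (∀ w : N ⋊[φ] G, (orderOf w).Coprime p → P (toMulAut φ w)) ↔
      ∀ g, (orderOf g).Coprime p → P (φ g) := by
  refine ⟨fun hP g hg => ?_, fun hP w hw => ?_⟩
  · rw [← toMulAut_inr]
    exact hP (inr g) (by rwa [orderOf_injective _ inr_injective])
  · obtain ⟨g, hg, hgw⟩ := MonoidHom.exists_coprime_orderOf_eq hp φ
      (range_toMulAut h ▸ (toMulAut φ).mem_range.mpr ⟨w, rfl⟩)
      (hw.coprime_dvd_left (orderOf_map_dvd _ w))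
    exact hgw ▸ hP g hg

theorem commutatorElement_inv_inl (n : N) (w : N ⋊[φ] G) :
    ⁅(inl n : N ⋊[φ] G)⁻¹, w⁆ = inl (n⁻¹ * toMulAut φ w n) := by
  rw [commutatorElement_def, inv_inv, mul_assoc _ w, mul_assoc, conj_inl, map_mul, map_inv]

end SemidirectProduct

section Operators

variable {R G : Type*} [Group R] [Group G] (φ : R →* MulAut G)

theorem mem_opL_zero {x : G} : x ∈ opL φ 0 ↔ x = 1 :=
  ⟨fun h => h [] rfl, fun h l hl => by rw [List.length_eq_zero_iff.mp hl, List.foldl_nil, h]⟩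

theorem mem_opL_succ {n : ℕ} {x : G} : x ∈ opL φ (n + 1) ↔ ∀ r, opComm φ x r ∈ opL φ n := by
  refine ⟨fun h r l hl => h (r :: l) (by rw [List.length_cons, hl]), fun h l hl => ?_⟩
  obtain ⟨r, l, rfl⟩ := List.exists_cons_of_length_eq_add_one hl
  exact h r l (Nat.succ_injective hl)

open SemidirectProduct in
theorem mem_opL_iff_inl_mem_upperCentralSeries (hInn : ∀ g : G, MulAut.conj g ∈ φ.range)
    (n : ℕ) (x : G) : x ∈ opL φ n ↔ inl x ∈ Subgroup.upperCentralSeries (G ⋊[φ] R) n := by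
  induction n generalizing x with
  | zero =>
    rw [mem_opL_zero, Subgroup.upperCentralSeries_zero, Subgroup.mem_bot,
      map_eq_one_iff _ inl_injective]
  | succ n ih =>
    rw [mem_opL_succ, ← inv_mem_iff, Subgroup.mem_upperCentralSeries_succ_iff]
    simp only [ih, opComm, commutatorElement_inv_inl]
    exact (forall_toMulAut_iff (P := fun α => inl (x⁻¹ * α x) ∈ _) hInn).symm

end Operators

/-- Let `R` be a group of operators for a finite group `G` (acting via `φ : R →* Aut G`) such
that every inner automorphism of `G` lies in `φ(R)`, and let `g` be a `p`-element of `G`.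
Then `g` lies in the absolute `R`-hypercenter `L_∞(G, R) = ⋃ₙ Lₙ(G, R)` iff `g^r = g` for
every `r ∈ R` of order coprime to `p`. -/
theorem mem_opHypercenter_iff (p : ℕ) (hp : p.Prime) (R G : Type*) [Group R] [Group G]
    [Finite R] [Finite G] (φ : R →* MulAut G)
    (hInn : ∀ g : G, MulAut.conj g ∈ φ.range)
    (g : G) (hg : ∃ k : ℕ, orderOf g = p ^ k) :
    (∃ n : ℕ, g ∈ opL φ n) ↔ ∀ r : R, Nat.Coprime (orderOf r) p → φ r g = g := by
  open SemidirectProduct in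
  calc (∃ n, g ∈ opL φ n) ↔ ∃ n, inl g ∈ Subgroup.upperCentralSeries (G ⋊[φ] R) n :=
        exists_congr fun n => mem_opL_iff_inl_mem_upperCentralSeries φ hInn n g
    _ ↔ ∀ w : G ⋊[φ] R, (orderOf w).Coprime p → Commute w (inl g) :=
        exists_mem_upperCentralSeries_iff_commute hp (by rwa [orderOf_injective _ inl_injective])
    _ ↔ ∀ w : G ⋊[φ] R, (orderOf w).Coprime p → toMulAut φ w g = g := by
        simp only [commute_inl_iff]
    _ ↔ ∀ r : R, (orderOf r).Coprime p → φ r g = g :=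
        forall_coprime_toMulAut_iff hp hInn (P := fun α => α g = g)
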